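/- arXiv:2404.13661 — 8 statements merged into one kernel-verified Lean document; each statement's English description precedes it below -/
import Mathlib

section
/- For all ordinals x, y, z, t, the identity x + y + z + x + t + y = y + x + z + x + t + y holds. -/
/-!
If `x, y ≤ s` and `e = log ω s`, the Cantor normal forms of `x` and `y` start with `ω ^ e * m`
and `ω ^ e * n` for natural `m, n` (possibly zero), and everything below `ω ^ e` is absorbed by
`s`. Hence `x + (y + s) = ω ^ e * (m + n) + s`, which is symmetric in `x` and `y`. In the
theorem `x` and `y` both occur in `s = z + x + t + y`.
-/

namespace Ordinal

theorem add_eq_opow_mul_div_add {u s e : Ordinal} (hs : ω ^ e ≤ s) :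
    u + s = ω ^ e * (u / ω ^ e) + s := by
  have hP : ω ^ e ≠ 0 := opow_ne_zero _ omega0_ne_zero
  conv_lhs => rw [← div_add_mod u (ω ^ e)]
  rw [add_assoc, add_of_omega0_opow_le (mod_lt u hP) hs]

theorem add_left_comm_of_le {x y s : Ordinal} (hx : x ≤ s) (hy : y ≤ s) :
    x + (y + s) = y + (x + s) := by
  rcases eq_or_ne s 0 with rfl | hs
  · rw [nonpos_iff_eq_zero.1 hx, nonpos_iff_eq_zero.1 hy]
  set P := ω ^ log ω s
  have hPs : P ≤ s := opow_log_le_self ω hs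
  have finite_div {u : Ordinal} (hu : u ≤ s) : ∃ n : ℕ, u / P = n :=
    lt_omega0.1 ((div_le_left hu P).trans_lt (div_opow_log_lt s one_lt_omega0))
  obtain ⟨m, hm⟩ := finite_div hx
  obtain ⟨n, hn⟩ := finite_div hy
  have expand {u v : Ordinal} : u + (v + s) = P * (u / P + v / P) + s := by
    rw [add_eq_opow_mul_div_add (u := v) hPs, add_eq_opow_mul_div_add (hPs.trans le_add_self),
      ← add_assoc, ← mul_add]
  rw [expand, expand, hm, hn, ← Nat.cast_add, ← Nat.cast_add, Nat.add_comm]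

end Ordinal

open Ordinal

theorem guarded_commutation (x y z t : Ordinal) :
    x + y + z + x + t + y = y + x + z + x + t + y := by
  simp only [add_assoc]
  exact add_left_comm_of_le (le_self_add.trans le_add_self)
    (le_add_self.trans (le_add_self.trans le_add_self))
end

section
/- For all ordinals x, y < ω^ω and natural numbers p < q, ω^p·x + y + ω^q·x = y + ω^q·x. -/
/-!
Write `n = log ω x`, which is finite because `x < ω ^ ω`. Then `ω ^ p * x < ω ^ (p + n + 1)`
while `ω ^ (q + n) ≤ ω ^ q * x`, and `p + n + 1 ≤ q + n` since `p < q` and `n` is finite.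
So `ω ^ p * x` lies below a power of `ω` that is at most `y + ω ^ q * x`, and is absorbed by it.
-/

open Ordinal Order

namespace Ordinal

theorem opow_mul_lt_opow_add_succ_log {b : Ordinal} (hb : 1 < b) (p x : Ordinal) :
    b ^ p * x < b ^ (p + succ (log b x)) := by
  rw [opow_add]
  exact mul_lt_mul_of_pos_left (lt_opow_succ_log_self hb x) (opow_pos p (zero_lt_one.trans hb))

theorem opow_add_log_le_opow_mul (b q : Ordinal) {x : Ordinal} (hx : x ≠ 0) :
    b ^ (q + log b x) ≤ b ^ q * x := by
  rw [opow_add]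
  exact mul_le_mul_right (opow_log_le_self b hx) _

theorem add_succ_le_add_of_lt_of_lt_omega0 {p q n : Ordinal} (hpq : p < q) (hn : n < ω) :
    p + succ n ≤ q + n := by
  obtain ⟨k, rfl⟩ := lt_omega0.1 hn
  rw [succ_eq_add_one, Nat.cast_add_one_comm, ← add_assoc]
  exact add_le_add_left (add_one_le_of_lt hpq) _

theorem omega0_opow_mul_add_of_le {p q x c : Ordinal} (hpq : p < q) (hx : log ω x < ω)
    (hc : ω ^ q * x ≤ c) : ω ^ p * x + c = c := by
  rcases eq_or_ne x 0 with rfl | hx0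
  · simp
  refine add_of_omega0_opow_le (opow_mul_lt_opow_add_succ_log one_lt_omega0 p x) ?_
  calc ω ^ (p + succ (log ω x)) ≤ ω ^ (q + log ω x) :=
        opow_le_opow_right omega0_pos (add_succ_le_add_of_lt_of_lt_omega0 hpq hx)
    _ ≤ ω ^ q * x := opow_add_log_le_opow_mul ω q hx0
    _ ≤ c := hc

end Ordinal

theorem pow_absorption_below_omega_omega_general (x y : Ordinal)
    (hx : x < ω ^ ω) (p q : ℕ) (hpq : p < q) :
    ω ^ (p : Ordinal) * x + y + ω ^ (q : Ordinal) * x = y + ω ^ (q : Ordinal) * x := by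
  rw [add_assoc]
  exact omega0_opow_mul_add_of_le (Nat.cast_lt.2 hpq)
    ((lt_opow_iff_log_lt' one_lt_omega0 omega0_ne_zero).1 hx) le_add_self

theorem pow_absorption_below_omega_omega (x y : Ordinal)
    (hx : x < ω ^ ω) (hy : y < ω ^ ω) (p q : ℕ) (hpq : p < q) :
    ω ^ (p : Ordinal) * x + y + ω ^ (q : Ordinal) * x = y + ω ^ (q : Ordinal) * x :=
  pow_absorption_below_omega_omega_general x y hx p q hpq
end

section
/- For all natural numbers p with 0 < p and 0 < q with p < q, and all ordinals x, y, the identity ω^p·x + y + ω^q·x = x + y + ω^q·x holds for all transfinite ordinals x and y. -/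
/-!
Split `x = ω ^ ω * u + v` with `v < ω ^ ω`. Since `p + ω = ω`, multiplying on the left by `ω ^ p`
fixes the first summand, so `ω ^ p * x` and `x` differ only in their tails `ω ^ p * v` and `v`.
Both tails have finite leading exponent, hence lie below `ω ^ (q + log v)`, and are absorbed by
`y + ω ^ q * x ≥ ω ^ q * v`.
-/

open Ordinal

namespace Ordinal

theorem omega0_opow_mul_add_eq_right_of_lt_omega0_opow_omega0 {p q v z : Ordinal} (hpq : p < q)
    (hv : v < ω ^ ω) (hz : ω ^ q * v ≤ z) : ω ^ p * v + z = z := by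
  rcases eq_or_ne v 0 with rfl | hv₀
  · simp
  obtain ⟨n, hn⟩ := lt_omega0.1 (lt_log_of_lt_opow omega0_ne_zero hv)
  have hv_lt : v < ω ^ ((n : Ordinal) + 1) := by
    rw [← hn, ← Order.succ_eq_add_one]
    exact lt_opow_succ_log_self one_lt_omega0 v
  have hv_ge : ω ^ (n : Ordinal) ≤ v := hn ▸ opow_log_le_self ω hv₀
  refine add_of_omega0_opow_le (b := q + n) ?_ ?_
  · calc ω ^ p * v < ω ^ p * ω ^ ((n : Ordinal) + 1) :=
          mul_lt_mul_of_pos_left hv_lt (opow_pos _ omega0_pos)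
      _ = ω ^ (p + 1 + n) := by
          -- `n + 1 = 1 + n` because `n` is finite
          rw [← opow_add, add_assoc, ← Nat.cast_one, ← Nat.cast_add, ← Nat.cast_add, add_comm]
      _ ≤ ω ^ (q + n) :=
          opow_le_opow_right omega0_pos (add_le_add_left (Order.add_one_le_of_lt hpq) _)
  · calc ω ^ (q + n) = ω ^ q * ω ^ (n : Ordinal) := opow_add _ _ _
      _ ≤ ω ^ q * v := mul_le_mul_right hv_ge _
      _ ≤ z := hz

theorem omega0_opow_natCast_mul (p : ℕ) (x : Ordinal) :
    ω ^ (p : Ordinal) * x = ω ^ ω * (x / ω ^ ω) + ω ^ (p : Ordinal) * (x % ω ^ ω) := by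
  conv_lhs => rw [← div_add_mod x (ω ^ ω)]
  rw [mul_add, ← mul_assoc, ← opow_add, natCast_add_omega0]

end Ordinal

theorem pow_absorption_all_ordinals_general (p q : ℕ) (hq : 0 < q) (hpq : p < q)
    (x y : Ordinal) :
    ω ^ (p : Ordinal) * x + y + ω ^ (q : Ordinal) * x
      = x + y + ω ^ (q : Ordinal) * x := by
  have hv : x % ω ^ ω < ω ^ ω := mod_lt x (opow_ne_zero _ omega0_ne_zero)
  have hz : ω ^ (q : Ordinal) * (x % ω ^ ω) ≤ y + ω ^ (q : Ordinal) * x := by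
    rw [omega0_opow_natCast_mul q x]
    exact le_add_self.trans le_add_self
  calc ω ^ (p : Ordinal) * x + y + ω ^ (q : Ordinal) * x
      = ω ^ ω * (x / ω ^ ω)
          + (ω ^ (p : Ordinal) * (x % ω ^ ω) + (y + ω ^ (q : Ordinal) * x)) := by
        rw [omega0_opow_natCast_mul p x, add_assoc, add_assoc]
    _ = ω ^ ω * (x / ω ^ ω)
          + (ω ^ (0 : Ordinal) * (x % ω ^ ω) + (y + ω ^ (q : Ordinal) * x)) := by
        rw [omega0_opow_mul_add_eq_right_of_lt_omega0_opow_omega0 (by exact_mod_cast hpq) hv hz,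
          omega0_opow_mul_add_eq_right_of_lt_omega0_opow_omega0 (by exact_mod_cast hq) hv hz]
    _ = x + y + ω ^ (q : Ordinal) * x := by
        rw [opow_zero, one_mul, ← add_assoc, div_add_mod, add_assoc]

theorem pow_absorption_all_ordinals (p q : ℕ) (hp : 0 < p) (hq : 0 < q) (hpq : p < q)
    (x y : Ordinal) :
    ω ^ (p : Ordinal) * x + y + ω ^ (q : Ordinal) * x
      = x + y + ω ^ (q : Ordinal) * x :=
  pow_absorption_all_ordinals_general p q hq hpq x y
end

section
/- For all ordinals x, y, t, u and natural numbers p, q with p > 0, the identity x + ω^q·y + t + ω^q·y + u + ω^p·x = ω^q·y + x + t + ω^q·y + u + ω^p·x holds. -/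
/-!
Both sides have the form `a + b + c` and `b + a + c` with `a = x`, `b = ω ^ q * y` and
`c = t + ω ^ q * y + u + ω ^ p * x`, where `a, b ≤ c`; for such ordinals `a + b + c = b + a + c`.
Compare the leading exponents `log ω a` and `log ω b`. If one is smaller, that summand is
absorbed both by the other one and by `c`, so both sides collapse to the same sum. If they are
equal, say to `γ`, then both sides are `ω ^ γ * (m + n) + c` for the finite leading
coefficients `m, n`, because `c ≥ ω ^ γ` absorbs the remainders below `ω ^ γ`.
-/

open Ordinal

namespace Ordinal

theorem add_eq_right_of_log_lt {a b c : Ordinal} (h : log ω a < log ω b) (hbc : b ≤ c) :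
    a + c = c := by
  have hb : b ≠ 0 := by
    rintro rfl
    simp at h
  refine add_of_omega0_opow_le (lt_opow_succ_log_self one_lt_omega0 a) ?_
  exact (opow_le_opow_right omega0_pos (Order.succ_le_of_lt h)).trans
    ((opow_log_le_self ω hb).trans hbc)

theorem add_add_eq_opow_mul_add {a b c γ : Ordinal} (hb : ω ^ γ ≤ b) (hc : ω ^ γ ≤ c) :
    a + b + c = ω ^ γ * (a / ω ^ γ + b / ω ^ γ) + c := by
  have ho : ω ^ γ ≠ 0 := (opow_pos γ omega0_pos).ne'
  have hb' : ω ^ γ ≤ ω ^ γ * (b / ω ^ γ) := le_mul_left _ ((div_pos ho).mpr hb)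
  conv_lhs => rw [← div_add_mod a (ω ^ γ), ← div_add_mod b (ω ^ γ)]
  rw [add_assoc (ω ^ γ * _), ← add_assoc (a % _), add_of_omega0_opow_le (mod_lt a ho) hb',
    add_assoc, add_assoc, add_of_omega0_opow_le (mod_lt b ho) hc, ← add_assoc, ← mul_add]

theorem add_add_comm_of_log_eq {a b c : Ordinal} (h : log ω a = log ω b)
    (ha : a ≤ c) (hb : b ≤ c) : a + b + c = b + a + c := by
  rcases eq_or_ne a 0 with rfl | ha0
  · simp
  rcases eq_or_ne b 0 with rfl | hb0
  · simp
  have hωa := opow_log_le_self ω ha0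
  have hωb : ω ^ log ω a ≤ b := h ▸ opow_log_le_self ω hb0
  obtain ⟨m, hm⟩ := lt_omega0.mp (div_opow_log_lt a one_lt_omega0)
  obtain ⟨n, hn⟩ := lt_omega0.mp (h ▸ div_opow_log_lt b one_lt_omega0)
  rw [add_add_eq_opow_mul_add hωb (hωa.trans ha), add_add_eq_opow_mul_add hωa (hωa.trans ha),
    hm, hn, ← Nat.cast_add, ← Nat.cast_add, Nat.add_comm]

theorem add_add_comm_of_le {a b c : Ordinal} (ha : a ≤ c) (hb : b ≤ c) :
    a + b + c = b + a + c := by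
  rcases lt_trichotomy (log ω a) (log ω b) with h | h | h
  · rw [add_eq_right_of_log_lt h le_rfl, add_assoc, add_eq_right_of_log_lt h hb]
  · exact add_add_comm_of_log_eq h ha hb
  · rw [add_eq_right_of_log_lt h le_rfl, add_assoc, add_eq_right_of_log_lt h ha]

end Ordinal

theorem hidden_old_variable2_general (x y t u : Ordinal) (p q : ℕ) :
    x + ω ^ (q : Ordinal) * y + t + ω ^ (q : Ordinal) * y + u + ω ^ (p : Ordinal) * x
      = ω ^ (q : Ordinal) * y + x + t + ω ^ (q : Ordinal) * y + u + ω ^ (p : Ordinal) * x := by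
  set c := ω ^ (q : Ordinal) * y
  have hx : x ≤ t + c + u + ω ^ (p : Ordinal) * x :=
    (le_mul_right x (opow_pos _ omega0_pos)).trans le_add_self
  have hc : c ≤ t + c + u + ω ^ (p : Ordinal) * x :=
    le_add_self.trans (le_self_add.trans le_self_add)
  simpa only [add_assoc] using add_add_comm_of_le hx hc

theorem hidden_old_variable2 (x y t u : Ordinal) (p q : ℕ) (hp : 0 < p) :
    x + ω ^ (q : Ordinal) * y + t + ω ^ (q : Ordinal) * y + u + ω ^ (p : Ordinal) * x
      = ω ^ (q : Ordinal) * y + x + t + ω ^ (q : Ordinal) * y + u + ω ^ (p : Ordinal) * x :=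
  hidden_old_variable2_general x y t u p q
end

section
/- For all ordinals x, y, z, t < ω^ω with the degrees satisfying ∂x = ∂y = μ and ∂(z + x + t + y) = μ, if x = ω^μ·a + α, y = ω^μ·b + β, z + x + t + y = ω^μ·c + γ with ∂α, ∂β, ∂γ < μ, then both x + y + (z + x + t + y) and y + x + (z + x + t + y) equal ω^μ·(a + b + c) + γ. -/
open Ordinal

/-- The degree of a nonzero ordinal: the largest exponent in its Cantor normal
form, i.e. the logarithm in base `ω`. -/
noncomputable def deg (α : Ordinal) : Ordinal := Ordinal.log ω α

theorem lt_omega0_opow_of_deg_lt {α μ : Ordinal} (h : α = 0 ∨ deg α < μ) : α < ω ^ μ := by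
  rcases h with rfl | h
  · exact opow_pos μ omega0_pos
  · exact lt_opow_of_log_lt one_lt_omega0 h

theorem omega0_opow_mul_add_add_omega0_opow_mul_add {μ s t δ ε : Ordinal}
    (hδ : δ < ω ^ μ) (ht : t ≠ 0) :
    (ω ^ μ * s + δ) + (ω ^ μ * t + ε) = ω ^ μ * (s + t) + ε := by
  have hlead : ω ^ μ ≤ ω ^ μ * t + ε :=
    (le_mul_left _ (pos_iff_ne_zero.mpr ht)).trans le_self_add
  rw [add_assoc, add_of_omega0_opow_le hδ hlead, ← add_assoc, mul_add]

theorem guarded_commutation_key_case_general (x y z t : Ordinal) (μ : Ordinal)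
    (a b c : ℕ) (ha : 0 < a) (hb : 0 < b) (hc : 0 < c)
    (α β γ : Ordinal)
    (hxd : x = ω ^ μ * a + α) (hyd : y = ω ^ μ * b + β)
    (hzd : z + x + t + y = ω ^ μ * c + γ)
    (hα : α = 0 ∨ deg α < μ) (hβ : β = 0 ∨ deg β < μ) :
    x + y + (z + x + t + y) = ω ^ μ * ((a : Ordinal) + b + c) + γ ∧
    y + x + (z + x + t + y) = ω ^ μ * ((a : Ordinal) + b + c) + γ := by
  have hα_lt := lt_omega0_opow_of_deg_lt hα
  have hβ_lt := lt_omega0_opow_of_deg_lt hβ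
  have hc_ne : (c : Ordinal) ≠ 0 := Nat.cast_ne_zero.mpr hc.ne'
  rw [hzd, hxd, hyd]
  constructor
  · rw [omega0_opow_mul_add_add_omega0_opow_mul_add hα_lt (Nat.cast_ne_zero.mpr hb.ne'),
      omega0_opow_mul_add_add_omega0_opow_mul_add hβ_lt hc_ne]
  · rw [omega0_opow_mul_add_add_omega0_opow_mul_add hβ_lt (Nat.cast_ne_zero.mpr ha.ne'),
      omega0_opow_mul_add_add_omega0_opow_mul_add hα_lt hc_ne, ← Nat.cast_add b a, Nat.add_comm,
      Nat.cast_add]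

theorem guarded_commutation_key_case (x y z t : Ordinal) (μ : Ordinal)
    (hx : x < ω ^ ω) (hy : y < ω ^ ω) (hz : z < ω ^ ω) (ht : t < ω ^ ω)
    (hdx : deg x = μ) (hdy : deg y = μ) (hd : deg (z + x + t + y) = μ)
    (a b c : ℕ) (ha : 0 < a) (hb : 0 < b) (hc : 0 < c)
    (α β γ : Ordinal)
    (hxd : x = ω ^ μ * a + α) (hyd : y = ω ^ μ * b + β)
    (hzd : z + x + t + y = ω ^ μ * c + γ)
    (hα : α = 0 ∨ deg α < μ) (hβ : β = 0 ∨ deg β < μ) (hγ : γ = 0 ∨ deg γ < μ) :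
    x + y + (z + x + t + y) = ω ^ μ * ((a : Ordinal) + b + c) + γ ∧
    y + x + (z + x + t + y) = ω ^ μ * ((a : Ordinal) + b + c) + γ :=
  guarded_commutation_key_case_general x y z t μ a b c ha hb hc α β γ hxd hyd hzd hα hβ
end

section
/- For every ordinal x and natural number p ≥ 1, if x ≥ ω^ω then ω^p·x has the same degree as x, while x + anything of degree < ∂(ω^p·x) absorbs: concretely, if x ≥ ω^ω and x = x₁ + x₂ with ν(x₁) ≥ ω and ∂(x₂) < ω, then ω^p·x = x₁ + ω^p·x₂. -/
/-! Since `ν(x₁) ≥ ω`, every term of the Cantor normal form of `x₁` is a multiple of `ω ^ ω`, and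
`ω ^ p * ω ^ ω = ω ^ (p + ω) = ω ^ ω`; so `ω ^ p` is absorbed by `x₁` and left distributivity gives
the decomposition. For the degree, `log_ω (ω ^ p * x) = p + log_ω x`, and `p` is absorbed because
`log_ω x ≥ ω`. -/

open Ordinal

/-- The valuation of an ordinal: the smallest exponent in its Cantor normal form. -/
noncomputable def val (α : Ordinal) : Ordinal :=
  (((Ordinal.CNF ω α).getLast?).map Prod.fst).getD 0

namespace Ordinal

theorem opow_dvd_of_forall_le_fst_CNF {b e o : Ordinal} (h : ∀ x ∈ CNF b o, e ≤ x.1) :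
    b ^ e ∣ o := by
  induction o using CNF.rec b with
  | H0 => exact dvd_zero _
  | H o ho IH =>
    rw [CNF.ne_zero ho, List.forall_mem_cons] at h
    rw [← div_add_mod o (b ^ log b o)]
    exact dvd_add (dvd_mul_of_dvd_left (opow_dvd_opow b h.1) _) (IH h.2)

theorem opow_mul_eq_self_of_opow_omega0_dvd {a y : Ordinal} (ha : a < ω) (hy : ω ^ ω ∣ y) :
    ω ^ a * y = y := by
  obtain ⟨z, rfl⟩ := hy
  rw [← mul_assoc, ← opow_add, add_omega0 ha]

end Ordinal

theorem val_le_fst_of_mem_CNF {o : Ordinal} {x : Ordinal × Ordinal} (hx : x ∈ CNF ω o) :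
    val o ≤ x.1 := by
  obtain ⟨l, last, hl⟩ : ∃ l last, CNF ω o = l ++ [last] :=
    ⟨_, _, (List.dropLast_append_getLast (List.ne_nil_of_mem hx)).symm⟩
  have hval : val o = last.1 := by simp [val, hl]
  have hsorted := (CNF.sortedGT ω o).pairwise
  rw [hl, List.map_append, List.pairwise_append] at hsorted
  rw [hl, List.mem_append, List.mem_singleton] at hx
  rcases hx with hx | rfl
  · exact hval ▸ (hsorted.2.2 _ (List.mem_map_of_mem hx) _
      (List.mem_map_of_mem (List.mem_singleton_self _))).le
  · exact hval.le

theorem opow_val_dvd (o : Ordinal) : ω ^ val o ∣ o :=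
  opow_dvd_of_forall_le_fst_CNF fun _ => val_le_fst_of_mem_CNF

theorem deg_opow_natCast_mul {x : Ordinal} (hx : ω ^ ω ≤ x) (p : ℕ) :
    deg (ω ^ (p : Ordinal) * x) = deg x := by
  have hx0 : x ≠ 0 := ((opow_pos ω omega0_pos).trans_le hx).ne'
  have hdeg : ω ≤ deg x := (opow_le_iff_le_log one_lt_omega0 hx0).mp hx
  rw [deg, log_opow_mul one_lt_omega0 _ hx0]
  exact natCast_add_of_omega0_le hdeg p

theorem omega_pow_mul_decomposition_general (x : Ordinal) (p : ℕ)
    (hx : ω ^ ω ≤ x) (x₁ x₂ : Ordinal) (h : x = x₁ + x₂)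
    (h₁ : ω ≤ val x₁) :
    deg (ω ^ (p : Ordinal) * x) = deg x ∧
    ω ^ (p : Ordinal) * x = x₁ + ω ^ (p : Ordinal) * x₂ := by
  have hx₁ : ω ^ (p : Ordinal) * x₁ = x₁ :=
    opow_mul_eq_self_of_opow_omega0_dvd (natCast_lt_omega0 p)
      ((opow_dvd_opow ω h₁).trans (opow_val_dvd x₁))
  exact ⟨deg_opow_natCast_mul hx p, by rw [h, mul_add, hx₁]⟩

theorem omega_pow_mul_decomposition (x : Ordinal) (p : ℕ) (hp : 1 ≤ p)
    (hx : ω ^ ω ≤ x) (x₁ x₂ : Ordinal) (h : x = x₁ + x₂)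
    (h₁ : ω ≤ val x₁) (h₂ : deg x₂ < ω) :
    deg (ω ^ (p : Ordinal) * x) = deg x ∧
    ω ^ (p : Ordinal) * x = x₁ + ω ^ (p : Ordinal) * x₂ :=
  omega_pow_mul_decomposition_general x p hx x₁ x₂ h h₁
end

section
/- If two flat terms (sums of monomials ω^{e_i}·x_i with nonnegative integer exponents, nondecreasing exponents from right to left within each variable) define the same function from (ω^ω)^n to ω^ω, then for every variable x the subsequences of x-monomials in the two terms are equal as sequences. -/
/-!
Substituting `1` for a variable `x` and `0` for all the others turns a flat term into
`ω^{e_1} + ⋯ + ω^{e_k}`, where `e_1 ≥ ⋯ ≥ e_k` are the exponents of its `x`-monomials.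
This is a Cantor normal form, so it determines the list of exponents: the leading exponent
is `log ω` of the value, and the rest follows by left cancellation.
-/

open Ordinal

/-- Evaluation of a flat term, given as the list of its monomials from left to
right, each monomial `(e, i)` denoting `ω^e · x_i`.  The sum is taken in
left-to-right order. -/
noncomputable def evalFlat (φ : ℕ → Ordinal) (l : List (ℕ × ℕ)) : Ordinal :=
  (l.map fun m => ω ^ (m.1 : Ordinal) * φ m.2).foldr (· + ·) 0

/-- A list of monomials is flat if, within each variable, the exponents are
nondecreasing from right to left (i.e. nonincreasing from left to right). -/
def IsFlat (l : List (ℕ × ℕ)) : Prop :=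
  l.Pairwise fun m m' => m.2 = m'.2 → m'.1 ≤ m.1

universe u

noncomputable def omegaOpowSum (E : List ℕ) : Ordinal.{u} :=
  (E.map fun e : ℕ => ω ^ (e : Ordinal.{u})).sum

theorem omegaOpowSum_cons (e : ℕ) (E : List ℕ) :
    omegaOpowSum.{u} (e :: E) = ω ^ (e : Ordinal) + omegaOpowSum E := by
  simp [omegaOpowSum]

theorem omegaOpowSum_lt {E : List ℕ} {n : ℕ} (h : ∀ e ∈ E, e < n) :
    omegaOpowSum.{u} E < ω ^ (n : Ordinal) := by
  induction E with
  | nil => exact opow_pos _ omega0_pos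
  | cons e E ih =>
    rw [omegaOpowSum_cons]
    refine isPrincipal_add_omega0_opow _ ?_ (ih fun a ha => h a (.tail _ ha))
    exact (opow_lt_opow_iff_right one_lt_omega0).2 (by exact_mod_cast h e List.mem_cons_self)

theorem omegaOpowSum_cons_pos (e : ℕ) (E : List ℕ) : 0 < omegaOpowSum.{u} (e :: E) := by
  rw [omegaOpowSum_cons]
  exact (opow_pos _ omega0_pos).trans_le le_self_add

theorem log_omegaOpowSum_cons {e : ℕ} {E : List ℕ} (h : ∀ a ∈ E, a ≤ e) :
    log ω (omegaOpowSum.{u} (e :: E)) = e := by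
  rw [log_eq_iff one_lt_omega0 (omegaOpowSum_cons_pos e E).ne']
  refine ⟨by rw [omegaOpowSum_cons]; exact le_self_add, ?_⟩
  rw [← Nat.cast_succ]
  exact omegaOpowSum_lt <|
    List.forall_mem_cons.2 ⟨e.lt_succ_self, fun a ha => Nat.lt_succ_of_le (h a ha)⟩

theorem eq_of_omegaOpowSum_eq {E E' : List ℕ} (hE : E.Pairwise (· ≥ ·))
    (hE' : E'.Pairwise (· ≥ ·)) (h : omegaOpowSum.{u} E = omegaOpowSum.{u} E') : E = E' := by
  induction E generalizing E' with
  | nil =>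
    cases E' with
    | nil => rfl
    | cons e' E' => exact absurd h (omegaOpowSum_cons_pos e' E').ne
  | cons e E ih =>
    cases E' with
    | nil => exact absurd h (omegaOpowSum_cons_pos e E).ne'
    | cons e' E' =>
      rw [List.pairwise_cons] at hE hE'
      have hlead : e = e' := by
        have := congrArg (log ω) h
        rwa [log_omegaOpowSum_cons hE.1, log_omegaOpowSum_cons hE'.1, Nat.cast_inj] at this
      subst hlead
      rw [omegaOpowSum_cons, omegaOpowSum_cons] at h
      rw [ih hE.2 hE'.2 (add_left_cancel h)]

theorem evalFlat_cons (φ : ℕ → Ordinal) (m : ℕ × ℕ) (l : List (ℕ × ℕ)) :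
    evalFlat φ (m :: l) = ω ^ (m.1 : Ordinal) * φ m.2 + evalFlat φ l :=
  rfl

theorem evalFlat_indicator_one (l : List (ℕ × ℕ)) (x : ℕ) :
    evalFlat (fun i => if i = x then 1 else 0) l
      = omegaOpowSum.{u} ((l.filter fun m => m.2 = x).map Prod.fst) := by
  induction l with
  | nil => rfl
  | cons m l ih =>
    rw [evalFlat_cons, ih, List.filter_cons]
    by_cases hm : m.2 = x <;> simp [hm, omegaOpowSum_cons]

theorem IsFlat.pairwise_map_fst_filter {l : List (ℕ × ℕ)} (hl : IsFlat l) (x : ℕ) :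
    ((l.filter fun m => m.2 = x).map Prod.fst).Pairwise (· ≥ ·) := by
  refine List.pairwise_map.2 ((hl.filter _).imp_of_mem fun ha hb hab => hab ?_)
  simp_all

theorem map_fst_filter_snd_eq (l : List (ℕ × ℕ)) (x : ℕ) :
    ((l.filter fun m => m.2 = x).map Prod.fst).map (·, x) = l.filter fun m => m.2 = x := by
  rw [List.map_map]
  refine List.map_congr_left (fun m hm => ?_) |>.trans (List.map_id _)
  rw [List.mem_filter, decide_eq_true_iff] at hm
  obtain ⟨_, rfl⟩ := hm
  rfl

theorem flat_equiv_same_subsequences (l l' : List (ℕ × ℕ))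
    (hl : IsFlat l) (hl' : IsFlat l')
    (h : ∀ φ : ℕ → Ordinal, (∀ i, φ i < ω ^ ω) → evalFlat φ l = evalFlat φ l') :
    ∀ x : ℕ, l.filter (fun m => m.2 = x) = l'.filter (fun m => m.2 = x) := by
  intro x
  have hφ : ∀ i, (if i = x then 1 else 0 : Ordinal) < ω ^ ω := fun i => by
    split_ifs
    exacts [one_lt_omega0.trans_le (left_le_opow _ omega0_pos), opow_pos _ omega0_pos]
  have hexp := eq_of_omegaOpowSum_eq (hl.pairwise_map_fst_filter x)
    (hl'.pairwise_map_fst_filter x)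
    (by rw [← evalFlat_indicator_one, ← evalFlat_indicator_one]; exact h _ hφ)
  rw [← map_fst_filter_snd_eq l, ← map_fst_filter_snd_eq l', hexp]
end

section
/- For ordinals a, b and natural number parameters: given a flat single-variable evaluation, two flat terms in one variable x over ω^ω are equivalent as functions ω^ω → ω^ω if and only if they are identical sequences of monomials; in particular, evaluating at x = 1 determines the number of monomials and the ordering constraint determines the exponents. -/
/-!
At `x = 1` a flat term with nonincreasing exponents is `ω ^ e_n + ⋯ + ω ^ e_1`, a Cantor normal
form, and these are unique. A sum of powers `ω ^ e` with all `e < n` stays below `ω ^ n`, since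
`ω ^ n` is additively principal; so the larger of two distinct leading exponents gives the larger
value, and once the leading monomials agree they cancel on the left.
-/

open Ordinal

/-- Evaluation at `x` of a flat one-variable term, given as the list of the
exponents of its monomials from left to right: `ω^{e_n}·x + ⋯ + ω^{e_1}·x`. -/
noncomputable def evalFlat1 (l : List ℕ) (x : Ordinal) : Ordinal :=
  (l.map fun e : ℕ => ω ^ (e : Ordinal) * x).foldr (· + ·) 0

@[simp]
lemma evalFlat1_nil (x : Ordinal) : evalFlat1 [] x = 0 := rfl

@[simp]
lemma evalFlat1_cons (e : ℕ) (l : List ℕ) (x : Ordinal) :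
    evalFlat1 (e :: l) x = ω ^ (e : Ordinal) * x + evalFlat1 l x := rfl

lemma evalFlat1_one_lt_opow {n : ℕ} :
    ∀ {l : List ℕ}, (∀ e ∈ l, e < n) → evalFlat1 l 1 < ω ^ (n : Ordinal)
  | [], _ => by simp
  | e :: l, h => by
    rw [evalFlat1_cons, mul_one]
    refine isPrincipal_add_omega0_opow _ ?_ (evalFlat1_one_lt_opow fun e he ↦ h e (.tail _ he))
    exact (opow_lt_opow_iff_right one_lt_omega0).2 (Nat.cast_lt.2 (h e List.mem_cons_self))

lemma opow_le_evalFlat1_cons_one (e : ℕ) (l : List ℕ) :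
    ω ^ (e : Ordinal) ≤ evalFlat1 (e :: l) 1 := by
  simp

lemma evalFlat1_cons_one_pos (e : ℕ) (l : List ℕ) : 0 < evalFlat1 (e :: l) 1 :=
  (opow_pos _ omega0_pos).trans_le (opow_le_evalFlat1_cons_one e l)

lemma evalFlat1_cons_one_lt_of_lt {a b : ℕ} {s : List ℕ} (hs : ∀ e ∈ s, e ≤ a) (hab : a < b)
    (t : List ℕ) : evalFlat1 (a :: s) 1 < evalFlat1 (b :: t) 1 :=
  calc evalFlat1 (a :: s) 1
      < ω ^ ((a + 1 : ℕ) : Ordinal) := by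
        refine evalFlat1_one_lt_opow fun e he ↦ Nat.lt_succ_of_le ?_
        rcases List.mem_cons.1 he with rfl | he
        exacts [le_rfl, hs e he]
    _ ≤ ω ^ (b : Ordinal) := opow_le_opow_right omega0_pos (Nat.cast_le.2 hab)
    _ ≤ evalFlat1 (b :: t) 1 := opow_le_evalFlat1_cons_one b t

lemma eq_of_evalFlat1_one_eq :
    ∀ {l l' : List ℕ}, l.Pairwise (· ≥ ·) → l'.Pairwise (· ≥ ·) →
      evalFlat1 l 1 = evalFlat1 l' 1 → l = l'
  | [], [], _, _, _ => rfl
  | [], e :: l', _, _, h => absurd h.symm (evalFlat1_cons_one_pos e l').ne'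
  | e :: l, [], _, _, h => absurd h (evalFlat1_cons_one_pos e l).ne'
  | a :: s, b :: t, hl, hl', h => by
    rw [List.pairwise_cons] at hl hl'
    obtain rfl : a = b := by
      rcases lt_trichotomy a b with hab | hab | hab
      · exact absurd h (evalFlat1_cons_one_lt_of_lt hl.1 hab t).ne
      · exact hab
      · exact absurd h (evalFlat1_cons_one_lt_of_lt hl'.1 hab s).ne'
    rw [evalFlat1_cons, evalFlat1_cons, add_right_inj] at h
    rw [eq_of_evalFlat1_one_eq hl.2 hl'.2 h]

theorem one_variable_flat_equiv_iff_eq (l l' : List ℕ)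
    (hl : l.Pairwise (· ≥ ·)) (hl' : l'.Pairwise (· ≥ ·)) :
    (∀ x : Ordinal, x < ω ^ ω → evalFlat1 l x = evalFlat1 l' x) ↔ l = l' := by
  refine ⟨fun h ↦ eq_of_evalFlat1_one_eq hl hl' (h 1 ?_), fun h _ _ ↦ h ▸ rfl⟩
  exact one_lt_omega0.trans_le (left_le_opow ω omega0_pos)
end
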